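/- Let G be a bipartite graph with at least one edge whose cut monoid M_G is normal. Then the element (1, …, 1, 2) of ℤ^E × ℤ (all edge-coordinates equal to 1, last coordinate 2) lies in int(M_G); in particular m(G) ≤ 2. (This is the content of the lower bound reg K[G] ≥ |E| − 1 for normal cut algebras of bipartite graphs.) -/
import Mathlib


/-! Basic definitions for cut monoids of finite simple graphs. -/

open Classical in
/-- The cut vector of a vertex set `A`, as a function on `Sym2 V`:
value `1` on pairs with exactly one element in `A`, and `0` otherwise. -/
noncomputable def cutVec {V : Type} (A : Set V) : Sym2 V → ℤ :=
  Sym2.lift ⟨fun v w => if ((v ∈ A) ↔ (w ∈ A)) then 0 else 1,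
    fun v w => if_congr iff_comm rfl rfl⟩

variable {V : Type}

/-- The generators `(δ_A, 1)` of the cut monoid of `G`. -/
def cutGens (G : SimpleGraph V) : Set ((G.edgeSet → ℤ) × ℤ) :=
  {p | ∃ A : Set V, p = (fun e => cutVec A e.1, 1)}

/-- The cut monoid `M_G` of a graph `G`. -/
def cutMonoid (G : SimpleGraph V) : AddSubmonoid ((G.edgeSet → ℤ) × ℤ) :=
  AddSubmonoid.closure (cutGens G)

/-- The group `gp(M_G)` generated by the cut monoid. -/
def cutGroup (G : SimpleGraph V) : AddSubgroup ((G.edgeSet → ℤ) × ℤ) :=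
  AddSubgroup.closure (cutGens G)

/-- `M_G` is normal: every `x ∈ gp(M_G)` with `n • x ∈ M_G` for some `n ≥ 1` lies in `M_G`. -/
def CutNormal (G : SimpleGraph V) : Prop :=
  ∀ x ∈ cutGroup G, (∃ n : ℕ, 1 ≤ n ∧ n • x ∈ cutMonoid G) → x ∈ cutMonoid G

/-- `M_G` is seminormal: every `x ∈ gp(M_G)` with `2 • x ∈ M_G` and `3 • x ∈ M_G`
lies in `M_G`. -/
def CutSeminormal (G : SimpleGraph V) : Prop :=
  ∀ x ∈ cutGroup G, 2 • x ∈ cutMonoid G → 3 • x ∈ cutMonoid G → x ∈ cutMonoid G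

/-- Generators of the cone of `M_G`: nonnegative real multiples of the `(δ_A, 1)`. -/
noncomputable def cutConeGens (G : SimpleGraph V) : Set ((G.edgeSet → ℝ) × ℝ) :=
  {q | ∃ (c : ℝ) (A : Set V), 0 ≤ c ∧
    q = c • ((fun e => ((cutVec A e.1 : ℤ) : ℝ), (1 : ℝ)))}

/-- The cone `cone(M_G)`: all finite nonnegative real combinations of the `(δ_A, 1)`. -/
noncomputable def cutCone (G : SimpleGraph V) : Set ((G.edgeSet → ℝ) × ℝ) :=
  (AddSubmonoid.closure (cutConeGens G) : Set ((G.edgeSet → ℝ) × ℝ))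

/-- The canonical map from `ℤ^E × ℤ` to `ℝ^E × ℝ`. -/
noncomputable def toRealCut (G : SimpleGraph V) (p : (G.edgeSet → ℤ) × ℤ) :
    (G.edgeSet → ℝ) × ℝ :=
  (fun e => ((p.1 e : ℤ) : ℝ), ((p.2 : ℤ) : ℝ))

/-- `int(M_G)`: elements of `M_G` mapping into the topological interior of `cone(M_G)`. -/
noncomputable def cutInterior (G : SimpleGraph V) : Set ((G.edgeSet → ℤ) × ℤ) :=
  {p | p ∈ cutMonoid G ∧ toRealCut G p ∈ interior (cutCone G)}

/-- The set of last coordinates `α ∈ ℕ` realized by elements of `int(M_G)`;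
its least element is `m(G)`. -/
noncomputable def cutDegrees (G : SimpleGraph V) : Set ℕ :=
  {α | ∃ x : G.edgeSet → ℤ, ((x, (α : ℤ)) : (G.edgeSet → ℤ) × ℤ) ∈ cutInterior G}

/-- `H` is a minor of `G`: branch sets `B u` are nonempty, pairwise disjoint,
induce connected subgraphs, and edges of `H` are witnessed by edges of `G`. -/
def GraphMinor {W V : Type} (H : SimpleGraph W) (G : SimpleGraph V) : Prop :=
  ∃ B : W → Set V,
    (∀ u, (B u).Nonempty) ∧
    (∀ u v, u ≠ v → Disjoint (B u) (B v)) ∧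
    (∀ u, (G.induce (B u)).Connected) ∧
    (∀ u v, H.Adj u v → ∃ a ∈ B u, ∃ b ∈ B v, G.Adj a b)

/-- `G` is `K₅`-minor-free. -/
def K5Free (G : SimpleGraph V) : Prop :=
  ¬ GraphMinor (⊤ : SimpleGraph (Fin 5)) G

/-- `G` is bipartite: vertices split into two parts so every edge joins the parts. -/
def BipartiteG (G : SimpleGraph V) : Prop :=
  ∃ s : Set V, ∀ ⦃v w⦄, G.Adj v w → ((v ∈ s ∧ w ∉ s) ∨ (w ∈ s ∧ v ∉ s))

/-- `G` has an induced cycle of length `n` (n ≥ 3): an induced-subgraph copy of the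
cycle graph of length `n`. -/
def HasInducedCycleLen (G : SimpleGraph V) (n : ℕ) : Prop :=
  3 ≤ n ∧ Nonempty (SimpleGraph.cycleGraph n ↪g G)

/-- `G` contains a triangle. -/
def HasTriangle (G : SimpleGraph V) : Prop :=
  ∃ a b c, G.Adj a b ∧ G.Adj b c ∧ G.Adj a c

/-- `G` is chordal: every induced cycle is a triangle. -/
def ChordalG (G : SimpleGraph V) : Prop :=
  ∀ n, HasInducedCycleLen G n → n = 3

/-- `G` is bridgeless: every edge lies on some cycle. -/
def BridgelessG (G : SimpleGraph V) : Prop :=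
  ∀ e ∈ G.edgeSet, ∃ (v : V) (c : G.Walk v v), c.IsCycle ∧ e ∈ c.edges

/-- `G` is (isomorphic to) a cycle of length `n`. -/
def IsCycleOfLen (G : SimpleGraph V) (n : ℕ) : Prop :=
  3 ≤ n ∧ Nonempty (G ≃g SimpleGraph.cycleGraph n)

/-- `G` is a cycle. -/
def IsCycleGraph (G : SimpleGraph V) : Prop :=
  ∃ n, IsCycleOfLen G n

/-- `G` is a `0`-sum of `G1` and `G2`: copies of `G1`, `G2` cover `G`,
overlap in exactly one vertex, and every edge comes from `G1` or `G2`. -/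
def IsZeroSumDecomp {V1 V2 : Type} (G : SimpleGraph V) (G1 : SimpleGraph V1)
    (G2 : SimpleGraph V2) : Prop :=
  ∃ (f1 : V1 ↪ V) (f2 : V2 ↪ V),
    Set.range f1 ∪ Set.range f2 = Set.univ ∧
    (∃ v, Set.range f1 ∩ Set.range f2 = {v}) ∧
    (∀ a b, G.Adj a b ↔
      ((∃ x y, f1 x = a ∧ f1 y = b ∧ G1.Adj x y) ∨
       (∃ x y, f2 x = a ∧ f2 y = b ∧ G2.Adj x y)))

/-- `G` is a `1`-sum of `G1` and `G2` along a common edge. -/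
def IsOneSumDecomp {V1 V2 : Type} (G : SimpleGraph V) (G1 : SimpleGraph V1)
    (G2 : SimpleGraph V2) : Prop :=
  ∃ (f1 : V1 ↪ V) (f2 : V2 ↪ V) (v w : V),
    v ≠ w ∧
    Set.range f1 ∪ Set.range f2 = Set.univ ∧
    Set.range f1 ∩ Set.range f2 = {v, w} ∧
    (∃ x y, f1 x = v ∧ f1 y = w ∧ G1.Adj x y) ∧
    (∃ x y, f2 x = v ∧ f2 y = w ∧ G2.Adj x y) ∧
    (∀ a b, G.Adj a b ↔
      ((∃ x y, f1 x = a ∧ f1 y = b ∧ G1.Adj x y) ∨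
       (∃ x y, f2 x = a ∧ f2 y = b ∧ G2.Adj x y)))

/-- Ring graphs: obtained, up to adding isolated vertices, from finitely many
(finite) trees and cycles by iterated `0`-sums and `1`-sums. -/
inductive IsRingGraph : {V : Type} → SimpleGraph V → Prop
  | tree {V : Type} (G : SimpleGraph V) :
      Finite V → G.Connected → G.IsAcyclic → IsRingGraph G
  | cycle {V : Type} (G : SimpleGraph V) : IsCycleGraph G → IsRingGraph G
  | zeroSum {V1 V2 V : Type} {G1 : SimpleGraph V1} {G2 : SimpleGraph V2}
      {G : SimpleGraph V} :
      IsRingGraph G1 → IsRingGraph G2 → IsZeroSumDecomp G G1 G2 → IsRingGraph G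
  | oneSum {V1 V2 V : Type} {G1 : SimpleGraph V1} {G2 : SimpleGraph V2}
      {G : SimpleGraph V} :
      IsRingGraph G1 → IsRingGraph G2 → IsOneSumDecomp G G1 G2 → IsRingGraph G
  | addIsolated {V W : Type} {G : SimpleGraph V} {H : SimpleGraph W} (f : V ↪ W) :
      IsRingGraph G → (∀ a b, H.Adj a b ↔ ∃ x y, f x = a ∧ f y = b ∧ G.Adj x y) →
      IsRingGraph H

/-- An edge of an induced subgraph is an edge of the ambient graph. -/
lemma induce_edge_mem (G : SimpleGraph V) (s : Set V) (e : Sym2 s)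
    (he : e ∈ (G.induce s).edgeSet) : e.map Subtype.val ∈ G.edgeSet := by
  induction e using Sym2.ind with
  | _ a b =>
    rw [Sym2.map_pair_eq, SimpleGraph.mem_edgeSet]
    exact he

/-- Restriction of a vector indexed by the edges of `G` to the edges of the
subgraph of `G` induced on `s`. -/
noncomputable def restrictCut (G : SimpleGraph V) (s : Set V) (p : G.edgeSet → ℤ) :
    (G.induce s).edgeSet → ℤ :=
  fun e => p ⟨e.1.map Subtype.val, induce_edge_mem G s e.1 e.2⟩

open Classical in
lemma cutVec_mk {V : Type} (A : Set V) (a b : V) :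
    cutVec A s(a, b) = if ((a ∈ A) ↔ (b ∈ A)) then 0 else 1 := rfl

lemma cutVec_pair {V : Type} (s A : Set V) (a b : V)
    (h : (a ∈ s ∧ b ∉ s) ∨ (b ∈ s ∧ a ∉ s)) :
    cutVec A s(a, b) + cutVec (symmDiff s A) s(a, b) = 1 := by
  rw [cutVec_mk, cutVec_mk]
  by_cases h1 : a ∈ A <;> by_cases h2 : b ∈ A <;>
    rcases h with ⟨ha, hb⟩ | ⟨hb, ha⟩ <;>
      simp [Set.mem_symmDiff, h1, h2, ha, hb]

open Classical in
lemma cutVec_chi {V : Type} (u v a b : V) (huv : u ≠ v) (hab : a ≠ b) :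
    cutVec {u} s(a, b) + cutVec {v} s(a, b) - cutVec {u, v} s(a, b)
      = if s(a, b) = s(u, v) then 2 else 0 := by
  rw [cutVec_mk, cutVec_mk, cutVec_mk]
  rw [if_congr (Sym2.eq_iff) rfl rfl]
  by_cases h1 : a = u <;> by_cases h2 : a = v <;> by_cases h3 : b = u <;>
    by_cases h4 : b = v <;>
      simp_all [Set.mem_insert_iff, Set.mem_singleton_iff]

lemma edge_rep {V : Type} (G : SimpleGraph V) (e : G.edgeSet) :
    ∃ a b, G.Adj a b ∧ e.1 = s(a, b) := by
  obtain ⟨e, he⟩ := e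
  induction e using Sym2.ind with
  | _ a b => exact ⟨a, b, he, rfl⟩

lemma cutVec_empty {V : Type} (a b : V) : cutVec (∅ : Set V) s(a, b) = 0 := by
  simp [cutVec_mk]

/-- The real generators. -/
noncomputable def gRcut {V : Type} (G : SimpleGraph V) (A : Set V) :
    (G.edgeSet → ℝ) × ℝ :=
  (fun e => ((cutVec A e.1 : ℤ) : ℝ), 1)

open Classical in
noncomputable def Tcut {V : Type} [Fintype V] (G : SimpleGraph V) :
    (Set V → ℝ) →ₗ[ℝ] ((G.edgeSet → ℝ) × ℝ) where
  toFun c := ∑ A : Set V, c A • gRcut G A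
  map_add' x y := by simp [add_smul, Finset.sum_add_distrib]
  map_smul' r x := by simp [smul_smul, Finset.smul_sum]

open Classical in
lemma Tcut_single {V : Type} [Fintype V] (G : SimpleGraph V) (A : Set V) :
    Tcut G (Pi.single A 1) = gRcut G A := by
  simp [Tcut, Pi.single_apply, ite_smul, Finset.sum_ite_eq']

lemma gRcut_empty {V : Type} (G : SimpleGraph V) :
    gRcut G ∅ = (0, 1) := by
  unfold gRcut
  refine Prod.ext ?_ rfl
  funext e
  obtain ⟨a, b, hab, he⟩ := edge_rep G e
  simp [he, cutVec_empty]

open Classical in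
lemma Tcut_surjective {V : Type} [Fintype V] (G : SimpleGraph V) :
    Function.Surjective (Tcut G) := by
  rw [← LinearMap.range_eq_top, ← top_le_iff]
  have hgen : ∀ A : Set V, gRcut G A ∈ LinearMap.range (Tcut G) :=
    fun A => ⟨Pi.single A 1, Tcut_single G A⟩
  have hzero : ((0, 1) : (G.edgeSet → ℝ) × ℝ) ∈ LinearMap.range (Tcut G) := by
    rw [← gRcut_empty]; exact hgen ∅
  have hsingle : ∀ f : G.edgeSet,
      ((Pi.single f 1, 0) : (G.edgeSet → ℝ) × ℝ) ∈ LinearMap.range (Tcut G) := by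
    intro f
    obtain ⟨a, b, hab, hf⟩ := edge_rep G f
    have key : gRcut G {a} + gRcut G {b} - gRcut G {a, b} - gRcut G ∅
        = (2 : ℝ) • ((Pi.single f 1, 0) : (G.edgeSet → ℝ) × ℝ) := by
      refine Prod.ext ?_ (by simp [gRcut])
      funext e
      obtain ⟨c, d, hcd, he⟩ := edge_rep G e
      have hchi := cutVec_chi a b c d hab.ne hcd.ne
      have hval : e = f ↔ s(c, d) = s(a, b) := by
        rw [← he, ← hf, Subtype.ext_iff]
      simp only [Prod.fst_add, Prod.fst_sub, Prod.smul_fst, Pi.add_apply,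
        Pi.sub_apply, Pi.smul_apply, smul_eq_mul, gRcut]
      rw [he, cutVec_empty, Pi.single_apply]
      by_cases hef : e = f
      · rw [if_pos hef]
        have h2 : cutVec {a} s(c,d) + cutVec {b} s(c,d) - cutVec {a,b} s(c,d) = 2 := by
          rw [hchi, if_pos (hval.mp hef)]
        have h3 := congrArg (Int.cast : ℤ → ℝ) h2; push_cast at h3 ⊢; linarith
      · rw [if_neg hef]
        have h2 : cutVec {a} s(c,d) + cutVec {b} s(c,d) - cutVec {a,b} s(c,d) = 0 := by
          rw [hchi, if_neg (fun h => hef (hval.mpr h))]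
        have h3 := congrArg (Int.cast : ℤ → ℝ) h2; push_cast at h3 ⊢; linarith
    have h2 : ((2:ℝ) • ((Pi.single f 1, 0) : (G.edgeSet → ℝ) × ℝ))
        ∈ LinearMap.range (Tcut G) := by
      rw [← key]
      exact sub_mem (sub_mem (add_mem (hgen {a}) (hgen {b})) (hgen {a, b})) (hgen ∅)
    have h3 := Submodule.smul_mem _ ((2:ℝ)⁻¹) h2
    rwa [smul_smul, inv_mul_cancel₀ (by norm_num), one_smul] at h3
  rintro ⟨x, t⟩ -
  have hxt : ((x, t) : (G.edgeSet → ℝ) × ℝ)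
      = (∑ f : G.edgeSet, x f • ((Pi.single f 1, 0) : (G.edgeSet → ℝ) × ℝ))
        + t • ((0, 1) : (G.edgeSet → ℝ) × ℝ) := by
    refine Prod.ext ?_ ?_
    · rw [Prod.fst_add, Prod.fst_sum]
      funext e
      simp [Pi.single_apply, Finset.sum_apply, mul_ite, Finset.sum_ite_eq]
    · rw [Prod.snd_add, Prod.snd_sum]
      simp
  rw [hxt]
  exact add_mem (Submodule.sum_mem _ (fun f _ => Submodule.smul_mem _ _ (hsingle f)))
    (Submodule.smul_mem _ _ hzero)

lemma gRcut_pair {V : Type} (G : SimpleGraph V) (s : Set V)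
    (hs : ∀ ⦃v w⦄, G.Adj v w → ((v ∈ s ∧ w ∉ s) ∨ (w ∈ s ∧ v ∉ s))) (A : Set V) :
    gRcut G A + gRcut G (symmDiff s A) = ((fun _ => 1), 2) := by
  refine Prod.ext ?_ (by simp [gRcut]; norm_num)
  funext e
  obtain ⟨a, b, hab, he⟩ := edge_rep G e
  have h := cutVec_pair s A a b (hs hab)
  have h3 := congrArg (Int.cast : ℤ → ℝ) h
  push_cast at h3
  simp only [Prod.fst_add, Pi.add_apply, gRcut]
  rw [he]
  exact h3

open Classical in
lemma Tcut_sum {V : Type} [Fintype V] (G : SimpleGraph V) (s : Set V)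
    (hs : ∀ ⦃v w⦄, G.Adj v w → ((v ∈ s ∧ w ∉ s) ∨ (w ∈ s ∧ v ∉ s))) :
    Tcut G (fun _ => 2 / (Fintype.card (Set V) : ℝ))
      = ((fun _ => 1), 2) := by
  have hN : (0 : ℝ) < (Fintype.card (Set V) : ℝ) := by
    exact_mod_cast Fintype.card_pos
  set p : (G.edgeSet → ℝ) × ℝ := ((fun _ => 1), 2) with hp
  set S : (G.edgeSet → ℝ) × ℝ := ∑ A : Set V, gRcut G A with hS
  have hinv : Function.Involutive (fun A : Set V => symmDiff s A) :=
    fun A => symmDiff_symmDiff_cancel_left s A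
  have hre : ∑ A : Set V, gRcut G (symmDiff s A) = S :=
    (Equiv.sum_comp hinv.toPerm (gRcut G))
  have h2S : (2 : ℝ) • S = (Fintype.card (Set V) : ℝ) • p := by
    have : S + S = ∑ A : Set V, (gRcut G A + gRcut G (symmDiff s A)) := by
      rw [Finset.sum_add_distrib, hre]
    rw [two_smul, this]
    simp only [gRcut_pair G s hs]
    rw [Finset.sum_const, Finset.card_univ, ← hp, ← Nat.cast_smul_eq_nsmul ℝ]
  have hT : Tcut G (fun _ => 2 / (Fintype.card (Set V) : ℝ))
      = (2 / (Fintype.card (Set V) : ℝ)) • S := by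
    simp [Tcut, hS, Finset.smul_sum]
  have hss : (2 / (Fintype.card (Set V) : ℝ)) • S
      = ((Fintype.card (Set V) : ℝ))⁻¹ • ((2:ℝ) • S) := by
    rw [smul_smul]; ring_nf
  rw [hT, hss, h2S, smul_smul, inv_mul_cancel₀ hN.ne', one_smul]

/-- If `G` is bipartite with at least one edge and its cut monoid is
normal, then `(1,…,1,2)` lies in `int(M_G)`; in particular `m(G) ≤ 2`. -/
theorem bipartite_lower_bound {V : Type} [Fintype V] (G : SimpleGraph V)
    (hbip : BipartiteG G) (hedge : G.edgeSet.Nonempty) (hnorm : CutNormal G) :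
    (((fun _ => 1, 2) : (G.edgeSet → ℤ) × ℤ) ∈ cutInterior G) ∧
    sInf (cutDegrees G) ≤ 2 := by
  classical
  obtain ⟨s, hs⟩ := hbip
  have hmem : (((fun _ => 1, 2) : (G.edgeSet → ℤ) × ℤ)) ∈ cutMonoid G := by
    have heq : (((fun _ => 1, 2) : (G.edgeSet → ℤ) × ℤ))
        = ((fun e => cutVec s e.1, 1) : (G.edgeSet → ℤ) × ℤ)
          + ((fun e => cutVec (∅ : Set V) e.1, 1) : (G.edgeSet → ℤ) × ℤ) := by
      refine Prod.ext ?_ rfl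
      funext e
      obtain ⟨a, b, hab, he⟩ := edge_rep G e
      show (1:ℤ) = cutVec s e.1 + cutVec ∅ e.1
      rw [he, cutVec_empty, add_zero, cutVec_mk]
      rcases hs hab with ⟨h1, h2⟩ | ⟨h1, h2⟩ <;> simp [h1, h2]
    rw [heq]
    exact add_mem (AddSubmonoid.subset_closure ⟨s, rfl⟩)
      (AddSubmonoid.subset_closure ⟨∅, rfl⟩)
  have hint : toRealCut G ((fun _ => 1, 2) : (G.edgeSet → ℤ) × ℤ)
      ∈ interior (cutCone G) := by
    have hreal : toRealCut G ((fun _ => 1, 2) : (G.edgeSet → ℤ) × ℤ)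
        = (((fun _ => 1) : G.edgeSet → ℝ), (2:ℝ)) := by
      refine Prod.ext ?_ (by norm_num [toRealCut])
      funext e; simp [toRealCut]
    rw [hreal, mem_interior]
    have hU : IsOpen {c : Set V → ℝ | ∀ A, 0 < c A} := by
      have hU2 : {c : Set V → ℝ | ∀ A, 0 < c A}
          = Set.pi Set.univ (fun _ => Set.Ioi (0:ℝ)) := by
        ext c; simp [Set.mem_pi]
      rw [hU2]
      exact isOpen_set_pi Set.finite_univ (fun _ _ => isOpen_Ioi)
    refine ⟨Tcut G '' {c | ∀ A, 0 < c A}, ?_, ?_, ?_⟩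
    · rintro y ⟨c, hc, rfl⟩
      show (Tcut G c) ∈ (AddSubmonoid.closure (cutConeGens G) : Set _)
      have hTc : Tcut G c = ∑ A : Set V, c A • gRcut G A := rfl
      rw [hTc]
      exact AddSubmonoid.sum_mem _ (fun A _ =>
        AddSubmonoid.subset_closure ⟨c A, A, (hc A).le, rfl⟩)
    · exact (LinearMap.isOpenMap_of_finiteDimensional _ (Tcut_surjective G)) _ hU
    · refine ⟨fun _ => 2 / (Fintype.card (Set V) : ℝ), fun A => ?_, Tcut_sum G s hs⟩
      exact div_pos two_pos (by exact_mod_cast Fintype.card_pos)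
  refine ⟨⟨hmem, hint⟩, Nat.sInf_le ?_⟩
  have h2 : ((2:ℕ):ℤ) = 2 := by norm_num
  exact ⟨fun _ => 1, by rw [h2]; exact ⟨hmem, hint⟩⟩
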